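/- Let Δ ≥ 0 and let ρ be a Δ-MRF distribution on {-1,1}^n that is symmetric, i.e. ρ(σ) = ρ(-σ) for all σ ∈ {-1,1}^n, and let σ ∼ ρ. Then for every i ∈ [n]: Pr[σ_i = 1] = 1/2, and for every x ∈ {-1,1}^{[n]∖{i}} (conditioning is well defined since a Δ-MRF distribution has full support), Pr[σ_i = 1 | σ_{-i} = x] ≥ (1/2)·e^{-4Δ}, where σ_{-i} denotes the coordinates of σ other than i. -/

import Mathlib

/-- A Markov Random Field on `Ω = Ω 0 × ⋯ × Ω (n-1)`: a set of hyperedges,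
vertex potentials, and edge potentials, where each edge potential depends only
on the coordinates in that edge. -/
structure MRF (n : ℕ) (Ω : Fin n → Type) [∀ i, Fintype (Ω i)] where
  edges : Finset (Finset (Fin n))
  vertexPot : ∀ i : Fin n, Ω i → ℝ
  edgePot : Finset (Fin n) → (∀ i, Ω i) → ℝ
  edgePot_local : ∀ e ∈ edges, ∀ u v : ∀ i, Ω i,
    (∀ i ∈ e, u i = v i) → edgePot e u = edgePot e v

namespace MRF

variable {n : ℕ} {Ω : Fin n → Type} [∀ i, Fintype (Ω i)]

/-- The unnormalized Gibbs weight of a configuration. -/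
noncomputable def weight (M : MRF n Ω) (u : ∀ i, Ω i) : ℝ :=
  Real.exp (∑ i, M.vertexPot i (u i) + ∑ e ∈ M.edges, M.edgePot e u)

/-- The probability distribution induced by the MRF: `Pr[V = u] ∝ weight u`. -/
noncomputable def dist (M : MRF n Ω) (u : ∀ i, Ω i) : ℝ :=
  M.weight u / ∑ v, M.weight v

/-- The maximum weighted degree of the MRF is at most `Δ`. -/
def DegreeLE (M : MRF n Ω) (Δ : ℝ) : Prop :=
  ∀ (i : Fin n) (u : ∀ i, Ω i),
    |∑ e ∈ M.edges.filter (fun e => i ∈ e), M.edgePot e u| ≤ Δ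

end MRF

/-- `D` is a `Δ`-MRF distribution. -/
def IsMRFDist {n : ℕ} {Ω : Fin n → Type} [∀ i, Fintype (Ω i)]
    (Δ : ℝ) (D : (∀ i, Ω i) → ℝ) : Prop :=
  ∃ M : MRF n Ω, M.DegreeLE Δ ∧ D = M.dist

/-! Spin-flip symmetry together with total mass one forces `Pr[σᵢ = 1] = 1/2`. Given `σ_{-i} = x`,
the odds of `σᵢ = -1` against `σᵢ = +1` are `exp` of a log-weight difference. Flipping all spins
turns this difference into minus the corresponding one at `-x`, so the vertex potential at `i`
cancels from their sum and only incident edge potentials remain, each of absolute value at most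
`Δ`: the odds are at most `e^{2Δ}`. -/

open Function

section

variable {n : ℕ} {β : Fin n → Type*} [∀ i, Fintype (β i)]
  [∀ i, DecidableEq (β i)]

theorem sum_ite_eq_and_eq_off_eq {M : Type*} [AddCommMonoid M] (f : (∀ i, β i) → M)
    (x : ∀ i, β i) (i : Fin n) (c : β i) :
    (∑ σ, if σ i = c ∧ ∀ j, j ≠ i → σ j = x j then f σ else 0) = f (update x i c) := by
  simp_rw [← eq_update_iff, Finset.sum_ite_eq', Finset.mem_univ, if_true]

theorem sum_ite_eq_off_eq {M : Type*} [AddCommMonoid M] (f : (∀ i, β i) → M)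
    (x : ∀ i, β i) (i : Fin n) :
    (∑ σ, if ∀ j, j ≠ i → σ j = x j then f σ else 0) = ∑ c, f (update x i c) := by
  have hsplit : ∀ σ : ∀ i, β i, (if ∀ j, j ≠ i → σ j = x j then f σ else 0) =
      ∑ c, if σ i = c ∧ ∀ j, j ≠ i → σ j = x j then f σ else 0 := fun σ => by
    simp only [ite_and, Finset.sum_ite_eq, Finset.mem_univ, if_true]
  simp_rw [hsplit]
  rw [Finset.sum_comm]
  simp_rw [sum_ite_eq_and_eq_off_eq]

end

theorem sum_ite_apply_eq_true_of_symm {ι : Type*} [Fintype ι] [DecidableEq ι] (f : (ι → Bool) → ℝ)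
    (hsym : ∀ σ, f σ = f (fun i => !σ i)) (hf : ∑ σ, f σ = 1) (i : ι) :
    (∑ σ : ι → Bool, if σ i = true then f σ else 0) = 1 / 2 := by
  have hswap : (∑ σ : ι → Bool, if σ i = true then f σ else 0) =
      ∑ σ : ι → Bool, if σ i = false then f σ else 0 := by
    rw [← (Equiv.piCongrRight fun _ => Equiv.boolNot).sum_comp]
    refine Finset.sum_congr rfl fun σ _ => ?_
    show (if (!σ i) = true then f (fun j => !σ j) else 0) = _
    rw [← hsym]
    cases σ i <;> rfl
  have htotal : (∑ σ : ι → Bool, if σ i = true then f σ else 0) +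
      (∑ σ : ι → Bool, if σ i = false then f σ else 0) = 1 := by
    rw [← Finset.sum_add_distrib, ← hf]
    refine Finset.sum_congr rfl fun σ _ => ?_
    cases σ i <;> simp
  linarith

theorem half_mul_exp_neg_le_exp_div_exp_add_exp {s t d : ℝ} (hts : t - s ≤ d) (hd : 0 ≤ d) :
    1 / 2 * Real.exp (-d) ≤ Real.exp s / (Real.exp s + Real.exp t) := by
  rw [le_div_iff₀ (by positivity), mul_assoc, mul_add, ← Real.exp_add, ← Real.exp_add]
  have h1 : Real.exp (-d + s) ≤ Real.exp s := Real.exp_le_exp.2 (by linarith)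
  have h2 : Real.exp (-d + t) ≤ Real.exp s := Real.exp_le_exp.2 (by linarith)
  linarith

namespace MRF

variable {n : ℕ} {Ω : Fin n → Type} [∀ i, Fintype (Ω i)]

noncomputable def logWeight (M : MRF n Ω) (u : ∀ i, Ω i) : ℝ :=
  ∑ i, M.vertexPot i (u i) + ∑ e ∈ M.edges, M.edgePot e u

noncomputable def incidentPot (M : MRF n Ω) (i : Fin n) (u : ∀ i, Ω i) : ℝ :=
  ∑ e ∈ M.edges.filter (fun e => i ∈ e), M.edgePot e u

variable (M : MRF n Ω)

theorem weight_eq_exp_logWeight (u : ∀ i, Ω i) : M.weight u = Real.exp (M.logWeight u) := rfl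

theorem weight_pos (u : ∀ i, Ω i) : 0 < M.weight u := Real.exp_pos _

theorem sum_weight_pos (u : ∀ i, Ω i) : 0 < ∑ v, M.weight v :=
  Finset.sum_pos (fun v _ => M.weight_pos v) ⟨u, Finset.mem_univ u⟩

theorem sum_dist [Nonempty (∀ i, Ω i)] : ∑ u, M.dist u = 1 := by
  simp only [dist, ← Finset.sum_div]
  exact div_self (M.sum_weight_pos (Classical.arbitrary _)).ne'

theorem dist_eq_dist_iff {u v : ∀ i, Ω i} :
    M.dist u = M.dist v ↔ M.logWeight u = M.logWeight v := by
  rw [dist, dist, div_left_inj' (M.sum_weight_pos u).ne', weight_eq_exp_logWeight,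
    weight_eq_exp_logWeight, Real.exp_eq_exp]

theorem dist_div_dist_add_dist (u v : ∀ i, Ω i) :
    M.dist u / (M.dist u + M.dist v) = M.weight u / (M.weight u + M.weight v) := by
  rw [dist, dist, ← add_div, div_div_div_cancel_right₀ (M.sum_weight_pos u).ne']

theorem DegreeLE.nonneg {M : MRF n Ω} {Δ : ℝ} (h : M.DegreeLE Δ) (i : Fin n) (u : ∀ i, Ω i) :
    0 ≤ Δ :=
  (abs_nonneg _).trans (h i u)

theorem DegreeLE.incidentPot_sub_le {M : MRF n Ω} {Δ : ℝ} (h : M.DegreeLE Δ) (i : Fin n)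
    (u v : ∀ i, Ω i) : M.incidentPot i u - M.incidentPot i v ≤ 2 * Δ := by
  have hu : |M.incidentPot i u| ≤ Δ := h i u
  have hv : |M.incidentPot i v| ≤ Δ := h i v
  linarith [(abs_le.1 hu).2, (abs_le.1 hv).1]

theorem logWeight_sub_logWeight_of_eq_off (i : Fin n) {u v : ∀ i, Ω i}
    (huv : ∀ j, j ≠ i → u j = v j) :
    M.logWeight u - M.logWeight v =
      M.vertexPot i (u i) - M.vertexPot i (v i) + (M.incidentPot i u - M.incidentPot i v) := by
  have hvertex : ∑ j ∈ Finset.univ.erase i, M.vertexPot j (u j) =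
      ∑ j ∈ Finset.univ.erase i, M.vertexPot j (v j) :=
    Finset.sum_congr rfl fun j hj => by rw [huv j (Finset.ne_of_mem_erase hj)]
  have hedge : ∑ e ∈ M.edges.filter (fun e => i ∉ e), M.edgePot e u =
      ∑ e ∈ M.edges.filter (fun e => i ∉ e), M.edgePot e v :=
    Finset.sum_congr rfl fun e he => by
      rw [Finset.mem_filter] at he
      exact M.edgePot_local e he.1 u v fun j hj => huv j (ne_of_mem_of_not_mem hj he.2)
  simp only [logWeight, incidentPot, ← Finset.add_sum_erase _ _ (Finset.mem_univ i),
    ← Finset.sum_filter_add_sum_filter_not M.edges (fun e => i ∈ e), hvertex, hedge]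
  ring

theorem logWeight_update_sub_le_of_symm {M : MRF n (fun _ => Bool)} {Δ : ℝ} (hdeg : M.DegreeLE Δ)
    (hsym : ∀ σ, M.logWeight σ = M.logWeight (fun j => !σ j)) (x : Fin n → Bool) (i : Fin n)
    (c : Bool) : M.logWeight (update x i c) - M.logWeight (update x i (!c)) ≤ 2 * Δ := by
  have hoff : ∀ (y : Fin n → Bool) (j : Fin n), j ≠ i → update y i c j = update y i (!c) j :=
    fun y j hj => by rw [update_of_ne hj, update_of_ne hj]
  have hflip : ∀ b, M.logWeight (update x i b) = M.logWeight (update (not ∘ x) i (!b)) :=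
    fun b => by rw [hsym, ← comp_update]; rfl
  have h₁ := M.logWeight_sub_logWeight_of_eq_off i (hoff x)
  have h₂ := M.logWeight_sub_logWeight_of_eq_off i (hoff (not ∘ x))
  simp only [update_self] at h₁ h₂
  rw [hflip c, hflip (!c), Bool.not_not] at h₁ ⊢
  linarith [hdeg.incidentPot_sub_le i (update x i c) (update x i (!c)),
    hdeg.incidentPot_sub_le i (update (not ∘ x) i (!c)) (update (not ∘ x) i c)]

end MRF

/-- `{-1,1}^n` is encoded as `Fin n → Bool`, with `true ↦ +1`. -/
theorem symmetric_mrf_marginal_bounds_general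
    {n : ℕ} (Δ : ℝ)
    (ρ : (Fin n → Bool) → ℝ)
    (hmrf : IsMRFDist (n := n) (Ω := fun _ => Bool) Δ ρ)
    (hsym : ∀ σ : Fin n → Bool, ρ σ = ρ (fun i => !(σ i))) :
    ∀ i : Fin n,
      (∑ σ : Fin n → Bool, if σ i = true then ρ σ else 0) = 1 / 2 ∧
      ∀ x : Fin n → Bool,
        (∑ σ : Fin n → Bool,
            if σ i = true ∧ ∀ j, j ≠ i → σ j = x j then ρ σ else 0) /
          (∑ σ : Fin n → Bool, if ∀ j, j ≠ i → σ j = x j then ρ σ else 0)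
        ≥ (1 / 2) * Real.exp (-(4 * Δ)) := by
  obtain ⟨M, hdeg, rfl⟩ := hmrf
  have hsymLog : ∀ σ, M.logWeight σ = M.logWeight (fun i => !σ i) :=
    fun σ => M.dist_eq_dist_iff.1 (hsym σ)
  refine fun i => ⟨sum_ite_apply_eq_true_of_symm _ hsym M.sum_dist i, fun x => ?_⟩
  rw [sum_ite_eq_and_eq_off_eq, sum_ite_eq_off_eq, Fintype.sum_bool, M.dist_div_dist_add_dist,
    M.weight_eq_exp_logWeight, M.weight_eq_exp_logWeight, ge_iff_le]
  have hΔ : 0 ≤ Δ := hdeg.nonneg i x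
  calc 1 / 2 * Real.exp (-(4 * Δ)) ≤ 1 / 2 * Real.exp (-(2 * Δ)) := by gcongr; linarith
    _ ≤ _ := half_mul_exp_neg_le_exp_div_exp_add_exp
      (M.logWeight_update_sub_le_of_symm hdeg hsymLog x i false) (by linarith)

/-- If `ρ` is a symmetric `Δ`-MRF distribution on `{-1,1}^n`
(encoded as `Fin n → Bool`, `true ↦ +1`) and `σ ∼ ρ`, then for every `i`,
`Pr[σᵢ = 1] = 1/2`, and for every assignment `x` of the other coordinates,
`Pr[σᵢ = 1 ∣ σ_{-i} = x] ≥ (1/2)·e^{-4Δ}`. -/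
theorem symmetric_mrf_marginal_bounds
    {n : ℕ} (Δ : ℝ) (hΔ : 0 ≤ Δ)
    (ρ : (Fin n → Bool) → ℝ)
    (hmrf : IsMRFDist (n := n) (Ω := fun _ => Bool) Δ ρ)
    (hsym : ∀ σ : Fin n → Bool, ρ σ = ρ (fun i => !(σ i))) :
    ∀ i : Fin n,
      (∑ σ : Fin n → Bool, if σ i = true then ρ σ else 0) = 1 / 2 ∧
      ∀ x : Fin n → Bool,
        (∑ σ : Fin n → Bool,
            if σ i = true ∧ ∀ j, j ≠ i → σ j = x j then ρ σ else 0) /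
          (∑ σ : Fin n → Bool, if ∀ j, j ≠ i → σ j = x j then ρ σ else 0)
        ≥ (1 / 2) * Real.exp (-(4 * Δ)) :=
  symmetric_mrf_marginal_bounds_general Δ ρ hmrf hsym
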